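/- arXiv:2102.10809 — 5 statements merged into one kernel-verified Lean document; each statement's English description precedes it below -/
import Mathlib

section
/- Let (f, p̂) be a classifier, bin a binning function, and (x_1,y_1),…,(x_N,y_N) ∈ X × Y a finite dataset with N ≥ 1. Let (k_γ)_{γ>0} be a family of kernels k_γ : X × X → (0,∞) such that for every pair of dataset points x_j, x_i we have k_γ(x_j, x_i) → 1 as γ → ∞. Then the maximum local calibration error MLCE_γ = max_{1≤j≤N} LCE_γ(x_j) converges, as γ → ∞, to the maximum calibration error MCE = max over nonempty bins B of |conf(B) − acc(B)|. -/
/-!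
As the kernel weights tend to `1`, the kernel-weighted average over the bin of `x_j` becomes the
plain bin average, so `LCE_γ(x_j) → |conf(B) − acc(B)|` for `B = bin(p̂(x_j))`. Every nonempty bin
is the bin of some dataset point, so the maximum over points is the maximum over nonempty bins,
and a maximum of finitely many convergent functions converges to the maximum of the limits.
-/

open Filter Finset Topology

lemma abs_sum_div_card_sub_sum_div_card {ι : Type*} (s : Finset ι) (a b : ι → ℝ) :
    |(∑ i ∈ s, a i) / #s - (∑ i ∈ s, b i) / #s| = |∑ i ∈ s, (a i - b i)| / #s := by
  rw [div_sub_div_same, ← sum_sub_distrib, abs_div, Nat.abs_cast]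

lemma sup'_filter_exists_eq_sup'_comp {ι β γ : Type*} [Fintype ι] [Fintype β] [DecidableEq β]
    [SemilatticeSup γ] (g : ι → β) [DecidablePred fun b => ∃ i, g i = b] (F : β → γ)
    (hne : (univ.filter fun b => ∃ i, g i = b).Nonempty) (hι : (univ : Finset ι).Nonempty) :
    (univ.filter fun b => ∃ i, g i = b).sup' hne F = univ.sup' hι (F ∘ g) := by
  have himage : (univ.filter fun b => ∃ i, g i = b) = univ.image g := by
    ext b
    simp
  rw [sup'_congr hne himage fun _ _ => rfl, sup'_image]

lemma tendsto_abs_sum_mul_div_sum {ι α : Type*} {l : Filter α} {s : Finset ι} (hs : s.Nonempty)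
    (a : ι → ℝ) {w : α → ι → ℝ} (hw : ∀ i ∈ s, Tendsto (w · i) l (𝓝 1)) :
    Tendsto (fun t => |∑ i ∈ s, a i * w t i| / ∑ i ∈ s, w t i) l (𝓝 (|∑ i ∈ s, a i| / #s)) := by
  have hnum : Tendsto (fun t => ∑ i ∈ s, a i * w t i) l (𝓝 (∑ i ∈ s, a i)) := by
    simpa using tendsto_finsetSum s fun i hi => (hw i hi).const_mul (a i)
  have hden : Tendsto (fun t => ∑ i ∈ s, w t i) l (𝓝 (#s : ℝ)) := by
    simpa using tendsto_finsetSum s hw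
  exact hnum.abs.div hden (by simpa using hs.ne_empty)

theorem stmt_0_general {X Y : Type*} [DecidableEq Y] (m : ℕ)
    (f : X → Y) (p : X → ℝ) (bin : ℝ → Fin m)
    (N : ℕ) (hN : 1 ≤ N) (x : Fin N → X) (y : Fin N → Y)
    (k : ℝ → X → X → ℝ)
    (hk_lim : ∀ i j : Fin N, Tendsto (fun γ : ℝ => k γ (x j) (x i)) atTop (nhds 1)) :
    Tendsto
      (fun γ : ℝ =>
        -- MLCE_γ : the maximum over dataset points x_j of LCE_γ(x_j)
        Finset.univ.sup' (Finset.univ_nonempty_iff.mpr ⟨⟨0, hN⟩⟩)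
          (fun j : Fin N =>
            |∑ i ∈ Finset.univ.filter fun i : Fin N => bin (p (x i)) = bin (p (x j)),
                (p (x i) - if f (x i) = y i then (1:ℝ) else 0) * k γ (x j) (x i)| /
              ∑ i ∈ Finset.univ.filter fun i : Fin N => bin (p (x i)) = bin (p (x j)),
                k γ (x j) (x i)))
      atTop
      (nhds
        -- MCE : the maximum over nonempty bins of |conf(B) − acc(B)|
        ((Finset.univ.filter fun b : Fin m => ∃ i : Fin N, bin (p (x i)) = b).sup'
          ⟨bin (p (x ⟨0, hN⟩)),
            Finset.mem_filter.mpr ⟨Finset.mem_univ _, ⟨⟨0, hN⟩, rfl⟩⟩⟩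
          (fun b : Fin m =>
            |(∑ i ∈ Finset.univ.filter fun i : Fin N => bin (p (x i)) = b, p (x i)) /
                (Finset.univ.filter fun i : Fin N => bin (p (x i)) = b).card -
              (∑ i ∈ Finset.univ.filter fun i : Fin N => bin (p (x i)) = b,
                  if f (x i) = y i then (1:ℝ) else 0) /
                (Finset.univ.filter fun i : Fin N => bin (p (x i)) = b).card|))) := by
  -- The nonemptiness witness is spelled out: the statement's one only unfolds to `Finset.Nonempty`.
  rw [sup'_filter_exists_eq_sup'_comp (fun i => bin (p (x i))) _
    ⟨_, mem_filter.mpr ⟨mem_univ _, ⟨0, hN⟩, rfl⟩⟩ (univ_nonempty_iff.mpr ⟨⟨0, hN⟩⟩)]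
  refine Tendsto.finset_sup'_nhds_apply _ fun j _ => ?_
  simp only [Function.comp_apply, abs_sum_div_card_sub_sum_div_card]
  exact tendsto_abs_sum_mul_div_sum ⟨j, by simp⟩ _ fun i _ => hk_lim i j

/-- As the kernel bandwidth `γ → ∞` (so that `k_γ(x_j, x_i) → 1` for all dataset
points), the maximum local calibration error `MLCE_γ = max_j LCE_γ(x_j)`
converges to the maximum calibration error
`MCE = max over nonempty bins B of |conf(B) − acc(B)|`. -/
theorem stmt_0 {X Y : Type*} [DecidableEq Y] (m : ℕ)
    (f : X → Y) (p : X → ℝ) (bin : ℝ → Fin m)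
    (hp : ∀ x : X, 0 ≤ p x ∧ p x ≤ 1)
    (N : ℕ) (hN : 1 ≤ N) (x : Fin N → X) (y : Fin N → Y)
    (k : ℝ → X → X → ℝ)
    (hk_pos : ∀ γ > (0:ℝ), ∀ a b : X, 0 < k γ a b)
    (hk_lim : ∀ i j : Fin N, Tendsto (fun γ : ℝ => k γ (x j) (x i)) atTop (nhds 1)) :
    Tendsto
      (fun γ : ℝ =>
        -- MLCE_γ : the maximum over dataset points x_j of LCE_γ(x_j)
        Finset.univ.sup' (Finset.univ_nonempty_iff.mpr ⟨⟨0, hN⟩⟩)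
          (fun j : Fin N =>
            |∑ i ∈ Finset.univ.filter fun i : Fin N => bin (p (x i)) = bin (p (x j)),
                (p (x i) - if f (x i) = y i then (1:ℝ) else 0) * k γ (x j) (x i)| /
              ∑ i ∈ Finset.univ.filter fun i : Fin N => bin (p (x i)) = bin (p (x j)),
                k γ (x j) (x i)))
      atTop
      (nhds
        -- MCE : the maximum over nonempty bins of |conf(B) − acc(B)|
        ((Finset.univ.filter fun b : Fin m => ∃ i : Fin N, bin (p (x i)) = b).sup'
          ⟨bin (p (x ⟨0, hN⟩)),
            Finset.mem_filter.mpr ⟨Finset.mem_univ _, ⟨⟨0, hN⟩, rfl⟩⟩⟩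
          (fun b : Fin m =>
            |(∑ i ∈ Finset.univ.filter fun i : Fin N => bin (p (x i)) = b, p (x i)) /
                (Finset.univ.filter fun i : Fin N => bin (p (x i)) = b).card -
              (∑ i ∈ Finset.univ.filter fun i : Fin N => bin (p (x i)) = b,
                  if f (x i) = y i then (1:ℝ) else 0) /
                (Finset.univ.filter fun i : Fin N => bin (p (x i)) = b).card|))) :=
  stmt_0_general m f p bin N hN x y k hk_lim
end

section
/- Let (f, p̂) be a classifier, bin a binning function, (x_1,y_1),…,(x_N,y_N) ∈ X × Y a finite dataset, and (k_γ)_{γ>0} a family of kernels k_γ : X × X → (0,∞). Let x ∈ X satisfy β(x) ≠ ∅ and suppose k_γ(x, x_i) → 1 as γ → ∞ for every i ∈ β(x). Then LCE_γ(x) converges, as γ → ∞, to |(1/|β(x)|) Σ_{i∈β(x)} (p̂(x_i) − 1[f(x_i)=y_i])|, i.e., to the absolute difference between the average confidence and the average accuracy over the bin of x. -/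
open Filter Topology

theorem Filter.Tendsto.abs_sum_mul_div_sum {ι α : Type*} {l : Filter α} {s : Finset ι}
    (hs : s.Nonempty) (w : ι → ℝ) {g : ι → α → ℝ} (hg : ∀ i ∈ s, Tendsto (g i) l (𝓝 1)) :
    Tendsto (fun a => |∑ i ∈ s, w i * g i a| / ∑ i ∈ s, g i a) l
      (𝓝 |(∑ i ∈ s, w i) / s.card|) := by
  have hnum : Tendsto (fun a => ∑ i ∈ s, w i * g i a) l (𝓝 (∑ i ∈ s, w i)) := by
    simpa using tendsto_finsetSum s fun i hi => (hg i hi).const_mul (w i)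
  have hden : Tendsto (fun a => ∑ i ∈ s, g i a) l (𝓝 (s.card : ℝ)) := by
    simpa using tendsto_finsetSum s hg
  have hcard : (0 : ℝ) < s.card := by exact_mod_cast hs.card_pos
  rw [abs_div, abs_of_pos hcard]
  exact hnum.abs.div hden hcard.ne'

theorem stmt_1_general {X Y : Type*} [DecidableEq Y] (m : ℕ)
    (f : X → Y) (p : X → ℝ) (bin : ℝ → Fin m)
    (N : ℕ) (x : Fin N → X) (y : Fin N → Y)
    (k : ℝ → X → X → ℝ)
    (x₀ : X)
    (hβ : (Finset.univ.filter fun i : Fin N => bin (p (x i)) = bin (p x₀)).Nonempty)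
    (hk_lim : ∀ i ∈ Finset.univ.filter fun i : Fin N => bin (p (x i)) = bin (p x₀),
      Tendsto (fun γ : ℝ => k γ x₀ (x i)) atTop (nhds 1)) :
    Tendsto
      (fun γ : ℝ =>
        |∑ i ∈ Finset.univ.filter fun i : Fin N => bin (p (x i)) = bin (p x₀),
            (p (x i) - if f (x i) = y i then (1:ℝ) else 0) * k γ x₀ (x i)| /
          ∑ i ∈ Finset.univ.filter fun i : Fin N => bin (p (x i)) = bin (p x₀),
            k γ x₀ (x i))
      atTop
      (nhds
        |(∑ i ∈ Finset.univ.filter fun i : Fin N => bin (p (x i)) = bin (p x₀),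
            (p (x i) - if f (x i) = y i then (1:ℝ) else 0)) /
          (Finset.univ.filter fun i : Fin N => bin (p (x i)) = bin (p x₀)).card|) :=
  Tendsto.abs_sum_mul_div_sum hβ (fun i => p (x i) - if f (x i) = y i then 1 else 0) hk_lim

/-- As the kernel bandwidth `γ → ∞` (so that `k_γ(x, x_i) → 1` for every point
`x_i` in the confidence bin of `x`), the local calibration error `LCE_γ(x)`
converges to the absolute difference between the average confidence and the
average accuracy over the bin of `x`. -/
theorem stmt_1 {X Y : Type*} [DecidableEq Y] (m : ℕ)
    (f : X → Y) (p : X → ℝ) (bin : ℝ → Fin m)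
    (hp : ∀ x : X, 0 ≤ p x ∧ p x ≤ 1)
    (N : ℕ) (x : Fin N → X) (y : Fin N → Y)
    (k : ℝ → X → X → ℝ)
    (hk_pos : ∀ γ > (0:ℝ), ∀ a b : X, 0 < k γ a b)
    (x₀ : X)
    (hβ : (Finset.univ.filter fun i : Fin N => bin (p (x i)) = bin (p x₀)).Nonempty)
    (hk_lim : ∀ i ∈ Finset.univ.filter fun i : Fin N => bin (p (x i)) = bin (p x₀),
      Tendsto (fun γ : ℝ => k γ x₀ (x i)) atTop (nhds 1)) :
    Tendsto
      (fun γ : ℝ =>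
        |∑ i ∈ Finset.univ.filter fun i : Fin N => bin (p (x i)) = bin (p x₀),
            (p (x i) - if f (x i) = y i then (1:ℝ) else 0) * k γ x₀ (x i)| /
          ∑ i ∈ Finset.univ.filter fun i : Fin N => bin (p (x i)) = bin (p x₀),
            k γ x₀ (x i))
      atTop
      (nhds
        |(∑ i ∈ Finset.univ.filter fun i : Fin N => bin (p (x i)) = bin (p x₀),
            (p (x i) - if f (x i) = y i then (1:ℝ) else 0)) /
          (Finset.univ.filter fun i : Fin N => bin (p (x i)) = bin (p x₀)).card|) :=
  stmt_1_general m f p bin N x y k x₀ hβ hk_lim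
end

section
/- Let (f, p̂) be a classifier, bin a binning function, (x_1,y_1),…,(x_N,y_N) ∈ X × Y a finite dataset, φ : X → ℝ^d a feature map with d ≥ 1, and for γ > 0 let k_γ(x, x') = exp(−‖φ(x) − φ(x')‖_1 / (dγ)) be the Laplacian kernel. Fix x ∈ X with β(x) ≠ ∅, and define the recalibrated confidence p̂'_γ(x) = Σ_{i∈β(x)} k_γ(x, x_i) · 1[f(x_i)=y_i] / Σ_{i∈β(x)} k_γ(x, x_i). Suppose there is i* ∈ β(x) such that ‖φ(x) − φ(x_{i*})‖_1 < ‖φ(x) − φ(x_i)‖_1 for every i ∈ β(x) with i ≠ i*. Then p̂'_γ(x) → 1[f(x_{i*}) = y_{i*}] as γ → 0⁺, i.e., the recalibrated confidence converges to the accuracy at the nearest neighbor of x in feature space within its confidence bin. -/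
/-!
Dividing numerator and denominator by the kernel weight of the nearest neighbour `i*`, every other
weight becomes `exp (-(Dᵢ - D_{i*}) / (dγ))`, where `Dᵢ = ‖φ x - φ xᵢ‖₁` and `Dᵢ - D_{i*} > 0`, which tends to `0` as
`γ → 0⁺`. The normalized numerator thus tends to `1[f(x_{i*}) = y_{i*}]` and the normalized
denominator to `1`.
-/

open Filter Topology

theorem tendsto_sum_mul_div_sum_of_tendsto_div_zero {ι α : Type*} {l : Filter α}
    {s : Finset ι} {i₀ : ι} (hi₀ : i₀ ∈ s) (w : ι → α → ℝ) (a : ι → ℝ)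
    (hw₀ : ∀ᶠ t in l, w i₀ t ≠ 0)
    (hw : ∀ i ∈ s, i ≠ i₀ → Tendsto (fun t => w i t / w i₀ t) l (𝓝 0)) :
    Tendsto (fun t => (∑ i ∈ s, w i t * a i) / ∑ i ∈ s, w i t) l (𝓝 (a i₀)) := by
  classical
  have hratio : ∀ i ∈ s, Tendsto (fun t => w i t / w i₀ t) l (𝓝 (if i = i₀ then 1 else 0)) := by
    intro i hi
    by_cases h : i = i₀
    · subst h
      rw [if_pos rfl]
      exact tendsto_const_nhds.congr' (hw₀.mono fun t ht => (div_self ht).symm)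
    · rw [if_neg h]
      exact hw i hi h
  have hnum : Tendsto (fun t => ∑ i ∈ s, w i t / w i₀ t * a i) l (𝓝 (a i₀)) := by
    simpa [hi₀] using tendsto_finsetSum s fun i hi => (hratio i hi).mul_const (a i)
  have hden : Tendsto (fun t => ∑ i ∈ s, w i t / w i₀ t) l (𝓝 1) := by
    simpa [hi₀] using tendsto_finsetSum s hratio
  have hlim := hnum.div hden one_ne_zero
  rw [div_one] at hlim
  refine hlim.congr' ?_
  filter_upwards [hw₀] with t ht
  simp only [div_mul_eq_mul_div, ← Finset.sum_div]
  exact div_div_div_cancel_right₀ ht _ _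

theorem tendsto_exp_neg_div_nhdsGT_zero {c : ℝ} (hc : 0 < c) :
    Tendsto (fun T : ℝ => Real.exp (-c / T)) (𝓝[>] 0) (𝓝 0) := by
  have h : Tendsto (fun T : ℝ => -c * T⁻¹) (𝓝[>] 0) atBot :=
    tendsto_inv_nhdsGT_zero.const_mul_atTop_of_neg (neg_neg_of_pos hc)
  exact Real.tendsto_exp_atBot.comp (h.congr fun T => (div_eq_mul_inv _ _).symm)

theorem tendsto_softmin_average_nhdsGT_zero {ι : Type*} {s : Finset ι} {i₀ : ι} (hi₀ : i₀ ∈ s)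
    (D a : ι → ℝ) (hD : ∀ i ∈ s, i ≠ i₀ → D i₀ < D i) :
    Tendsto (fun T : ℝ => (∑ i ∈ s, Real.exp (-D i / T) * a i) / ∑ i ∈ s, Real.exp (-D i / T))
      (𝓝[>] 0) (𝓝 (a i₀)) := by
  refine tendsto_sum_mul_div_sum_of_tendsto_div_zero hi₀ _ a
    (Eventually.of_forall fun T => (Real.exp_pos _).ne') fun i hi hne => ?_
  refine (tendsto_exp_neg_div_nhdsGT_zero (sub_pos.2 (hD i hi hne))).congr fun T => ?_
  rw [← Real.exp_sub, neg_sub, sub_div, neg_div, neg_div, sub_neg_eq_add, neg_add_eq_sub]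

theorem stmt_10_general {X Y : Type*} [DecidableEq Y] (m : ℕ)
    (f : X → Y) (p : X → ℝ) (bin : ℝ → Fin m)
    (N : ℕ) (x : Fin N → X) (y : Fin N → Y)
    (d : ℕ) (hd : 1 ≤ d) (φ : X → (Fin d → ℝ))
    (x₀ : X)
    (istar : Fin N)
    (histar : istar ∈ Finset.univ.filter fun i : Fin N => bin (p (x i)) = bin (p x₀))
    (hnear : ∀ i ∈ Finset.univ.filter fun i : Fin N => bin (p (x i)) = bin (p x₀),
      i ≠ istar →
        (∑ j : Fin d, |φ x₀ j - φ (x istar) j|) < ∑ j : Fin d, |φ x₀ j - φ (x i) j|) :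
    Tendsto
      (fun γ : ℝ =>
        (∑ i ∈ Finset.univ.filter fun i : Fin N => bin (p (x i)) = bin (p x₀),
            Real.exp (-(∑ j : Fin d, |φ x₀ j - φ (x i) j|) / (d * γ)) *
              (if f (x i) = y i then (1:ℝ) else 0)) /
          ∑ i ∈ Finset.univ.filter fun i : Fin N => bin (p (x i)) = bin (p x₀),
            Real.exp (-(∑ j : Fin d, |φ x₀ j - φ (x i) j|) / (d * γ)))
      (nhdsWithin 0 (Set.Ioi 0))
      (nhds (if f (x istar) = y istar then (1:ℝ) else 0)) := by
  have hbandwidth : Tendsto (fun γ : ℝ => (d : ℝ) * γ) (𝓝[>] 0) (𝓝[>] 0) :=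
    tendsto_iff_comap.2 (comap_mulLeft_nhdsGT_zero (by exact_mod_cast hd)).ge
  exact (tendsto_softmin_average_nhdsGT_zero histar _ (fun i => if f (x i) = y i then 1 else 0)
    hnear).comp hbandwidth

/-- As the bandwidth `γ → 0⁺`, the LoRe recalibrated confidence with Laplacian
kernel `k_γ(x, x') = exp(−‖φ x − φ x'‖₁/(dγ))` converges to the accuracy at the
nearest neighbor of `x` (in `ℓ¹` feature distance) within its confidence bin. -/
theorem stmt_10 {X Y : Type*} [DecidableEq Y] (m : ℕ)
    (f : X → Y) (p : X → ℝ) (bin : ℝ → Fin m)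
    (hp : ∀ x : X, 0 ≤ p x ∧ p x ≤ 1)
    (N : ℕ) (x : Fin N → X) (y : Fin N → Y)
    (d : ℕ) (hd : 1 ≤ d) (φ : X → (Fin d → ℝ))
    (x₀ : X)
    (hβ : (Finset.univ.filter fun i : Fin N => bin (p (x i)) = bin (p x₀)).Nonempty)
    (istar : Fin N)
    (histar : istar ∈ Finset.univ.filter fun i : Fin N => bin (p (x i)) = bin (p x₀))
    (hnear : ∀ i ∈ Finset.univ.filter fun i : Fin N => bin (p (x i)) = bin (p x₀),
      i ≠ istar →
        (∑ j : Fin d, |φ x₀ j - φ (x istar) j|) < ∑ j : Fin d, |φ x₀ j - φ (x i) j|) :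
    Tendsto
      (fun γ : ℝ =>
        (∑ i ∈ Finset.univ.filter fun i : Fin N => bin (p (x i)) = bin (p x₀),
            Real.exp (-(∑ j : Fin d, |φ x₀ j - φ (x i) j|) / (d * γ)) *
              (if f (x i) = y i then (1:ℝ) else 0)) /
          ∑ i ∈ Finset.univ.filter fun i : Fin N => bin (p (x i)) = bin (p x₀),
            Real.exp (-(∑ j : Fin d, |φ x₀ j - φ (x i) j|) / (d * γ)))
      (nhdsWithin 0 (Set.Ioi 0))
      (nhds (if f (x istar) = y istar then (1:ℝ) else 0)) :=
  stmt_10_general m f p bin N x y d hd φ x₀ istar histar hnear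
end

section
/- Let X and Y be countable types, let μ be a probability mass function on X × Y with marginal μ_X(x) = Σ_y μ(x, y), and let f : X → Y. Let p̂ : X → [0,1] be the Bayes confidence: p̂(x) = μ(x, f(x)) / μ_X(x) whenever μ_X(x) > 0 (with arbitrary values in [0,1] where μ_X(x) = 0). Then for every kernel k : X × X → [0,1], every binning function bin, and every x ∈ X: Σ_{(x',y') ∈ X × Y} μ(x', y') · (p̂(x') − 1[f(x')=y']) · k(x, x') · 1[bin(p̂(x')) = bin(p̂(x))] = 0. In particular, the Bayes-optimal confidence function is perfectly locally calibrated: its signed local calibration error vanishes at every point where the corresponding denominator is positive. -/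
/-!
Fubini reduces the sum over `X × Y` to one over `x'` of the inner sums over `y'`, and each inner
sum vanishes: for fixed `x'` the factors `k x x'` and the binning indicator are constant in `y'`,
while `∑_{y'} μ(x', y') (p̂(x') - 1[f(x') = y']) = μ_X(x') p̂(x') - μ(x', f(x')) = 0` by the
Bayes formula (both terms vanish when `μ_X(x') = 0`).
-/

/-- When `g` is not summable both sides are `0` by the `tsum` convention, so no summability
hypothesis is needed. -/
theorem tsum_prod_eq_zero_of_tsum_fiber_eq_zero {α β G : Type*} [AddCommGroup G]
    [UniformSpace G] [IsUniformAddGroup G] [CompleteSpace G] [T0Space G] {g : α × β → G}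
    (h : ∀ a, ∑' b, g (a, b) = 0) : ∑' z, g z = 0 := by
  by_cases hg : Summable g
  · rw [hg.tsum_prod]
    simp [h]
  · exact tsum_eq_zero_of_not_summable hg

theorem tsum_mul_sub_ite_eq_zero_of_eq_div {Y : Type*} [DecidableEq Y] {ν : Y → ℝ}
    (hν0 : ∀ y, 0 ≤ ν y) (hν : Summable ν) (y₀ : Y) {q : ℝ}
    (hq : 0 < ∑' y, ν y → q = ν y₀ / ∑' y, ν y) :
    ∑' y, ν y * (q - if y₀ = y then 1 else 0) = 0 := by
  have hite : Summable fun y => if y₀ = y then ν y else 0 :=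
    summable_of_ne_finset_zero (s := {y₀}) fun y hy => by
      rw [if_neg (Ne.symm (Finset.notMem_singleton.mp hy))]
  calc ∑' y, ν y * (q - if y₀ = y then 1 else 0)
      = ∑' y, (ν y * q - if y₀ = y then ν y else 0) := by
        congr 1; ext y; split_ifs <;> ring
    _ = (∑' y, ν y) * q - ν y₀ := by
        rw [(hν.mul_right q).tsum_sub hite, tsum_mul_right, tsum_ite_eq']
    _ = 0 := by
        rcases (tsum_nonneg hν0).lt_or_eq with hpos | hzero
        · rw [hq hpos]
          field_simp
          ring
        · have hν_eq_zero : ν = 0 := (hasSum_zero_iff_of_nonneg hν0).mp (hzero ▸ hν.hasSum)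
          rw [← hzero, hν_eq_zero]
          simp

theorem stmt_11_general {X Y : Type*} [DecidableEq Y]
    (μ : X × Y → ℝ) (hμ0 : ∀ z : X × Y, 0 ≤ μ z) (hμ1 : (∑' z : X × Y, μ z) = 1)
    (f : X → Y) (p : X → ℝ)
    (hbayes : ∀ x : X, 0 < (∑' y : Y, μ (x, y)) →
      p x = μ (x, f x) / ∑' y : Y, μ (x, y))
    (m : ℕ) (bin : ℝ → Fin m)
    (k : X → X → ℝ)
    (x : X) :
    (∑' z : X × Y, μ z * (p z.1 - if f z.1 = z.2 then (1:ℝ) else 0) * k x z.1 *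
        (if bin (p z.1) = bin (p x) then (1:ℝ) else 0)) = 0 ∧
      (0 < (∑' z : X × Y, μ z * k x z.1 *
          (if bin (p z.1) = bin (p x) then (1:ℝ) else 0)) →
        (∑' z : X × Y, μ z * (p z.1 - if f z.1 = z.2 then (1:ℝ) else 0) * k x z.1 *
            (if bin (p z.1) = bin (p x) then (1:ℝ) else 0)) /
          (∑' z : X × Y, μ z * k x z.1 *
            (if bin (p z.1) = bin (p x) then (1:ℝ) else 0)) = 0) := by
  have hμ : Summable μ := by
    by_contra h
    rw [tsum_eq_zero_of_not_summable h] at hμ1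
    exact zero_ne_one hμ1
  have hfiber : ∀ a, ∑' y, μ (a, y) * (p a - if f a = y then (1:ℝ) else 0) * k x a *
      (if bin (p a) = bin (p x) then (1:ℝ) else 0) = 0 := fun a => by
    rw [tsum_mul_right, tsum_mul_right, tsum_mul_sub_ite_eq_zero_of_eq_div (fun y => hμ0 _)
      (hμ.prod_factor a) (f a) (hbayes a), zero_mul, zero_mul]
  have hnum : (∑' z : X × Y, μ z * (p z.1 - if f z.1 = z.2 then (1:ℝ) else 0) * k x z.1 *
      (if bin (p z.1) = bin (p x) then (1:ℝ) else 0)) = 0 :=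
    tsum_prod_eq_zero_of_tsum_fiber_eq_zero hfiber
  exact ⟨hnum, fun _ => by rw [hnum, zero_div]⟩

/-- The Bayes-optimal confidence function `p̂(x) = μ(x, f(x)) / μ_X(x)` is
perfectly locally calibrated: for every kernel `k`, binning `bin`, and point
`x`, the (numerator of the) signed local calibration error vanishes; in
particular the signed local calibration error is `0` whenever the
corresponding denominator is positive. -/
theorem stmt_11 {X Y : Type*} [Countable X] [Countable Y] [DecidableEq Y]
    (μ : X × Y → ℝ) (hμ0 : ∀ z : X × Y, 0 ≤ μ z) (hμ1 : (∑' z : X × Y, μ z) = 1)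
    (f : X → Y) (p : X → ℝ)
    (hp : ∀ x : X, 0 ≤ p x ∧ p x ≤ 1)
    (hbayes : ∀ x : X, 0 < (∑' y : Y, μ (x, y)) →
      p x = μ (x, f x) / ∑' y : Y, μ (x, y))
    (m : ℕ) (bin : ℝ → Fin m)
    (k : X → X → ℝ) (hk : ∀ a b : X, 0 ≤ k a b ∧ k a b ≤ 1)
    (x : X) :
    (∑' z : X × Y, μ z * (p z.1 - if f z.1 = z.2 then (1:ℝ) else 0) * k x z.1 *
        (if bin (p z.1) = bin (p x) then (1:ℝ) else 0)) = 0 ∧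
      (0 < (∑' z : X × Y, μ z * k x z.1 *
          (if bin (p z.1) = bin (p x) then (1:ℝ) else 0)) →
        (∑' z : X × Y, μ z * (p z.1 - if f z.1 = z.2 then (1:ℝ) else 0) * k x z.1 *
            (if bin (p z.1) = bin (p x) then (1:ℝ) else 0)) /
          (∑' z : X × Y, μ z * k x z.1 *
            (if bin (p z.1) = bin (p x) then (1:ℝ) else 0)) = 0) :=
  stmt_11_general μ hμ0 hμ1 f p hbayes m bin k x
end

section
/- Let X and Y be countable types, let μ be a probability mass function on X × Y, and let (f, p̂) be a classifier. Consider the constant kernel k ≡ 1. Then the following are equivalent: (i) for every x ∈ X in the support of the X-marginal of μ, E_μ[(p̂(X) − 1[f(X)=Y]) · 1[p̂(X) = p̂(x)]] = 0; (ii) (f, p̂) is perfectly calibrated with respect to μ, i.e., for every c ∈ [0,1] with P_μ[p̂(X) = c] > 0, P_μ[f(X) = Y | p̂(X) = c] = c. That is, with the trivial kernel, perfect local calibration reduces to perfect calibration. -/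
/-- With the trivial kernel `k ≡ 1`, perfect local calibration reduces to
perfect calibration: the vanishing, at every support point `x`, of
`E_μ[(p̂(X) − 1[f(X)=Y]) · 1[p̂(X) = p̂(x)]]` is equivalent to
`P_μ[f(X) = Y | p̂(X) = c] = c` for every `c ∈ [0,1]` with `P_μ[p̂(X) = c] > 0`. -/
theorem stmt_12 {X Y : Type*} [Countable X] [Countable Y] [DecidableEq Y]
    (μ : X × Y → ℝ) (hμ0 : ∀ z : X × Y, 0 ≤ μ z) (hμ1 : (∑' z : X × Y, μ z) = 1)
    (f : X → Y) (p : X → ℝ)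
    (hp : ∀ x : X, 0 ≤ p x ∧ p x ≤ 1) :
    (∀ x : X, 0 < (∑' y : Y, μ (x, y)) →
        (∑' z : X × Y, μ z * (p z.1 - if f z.1 = z.2 then (1:ℝ) else 0) *
          (if p z.1 = p x then (1:ℝ) else 0)) = 0)
      ↔
    (∀ c : ℝ, 0 ≤ c → c ≤ 1 →
        0 < (∑' z : X × Y, μ z * (if p z.1 = c then (1:ℝ) else 0)) →
        (∑' z : X × Y, μ z * (if f z.1 = z.2 ∧ p z.1 = c then (1:ℝ) else 0)) /
          (∑' z : X × Y, μ z * (if p z.1 = c then (1:ℝ) else 0)) = c) := by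
  have hs : Summable μ := by
    by_contra h
    rw [tsum_eq_zero_of_not_summable h] at hμ1
    norm_num at hμ1
  -- summability of the indicator-weighted sums
  have hSP : ∀ c : ℝ, Summable (fun z : X × Y => μ z * (if p z.1 = c then (1:ℝ) else 0)) := by
    intro c
    apply Summable.of_nonneg_of_le (fun z => ?_) (fun z => ?_) hs
    · exact mul_nonneg (hμ0 z) (by split <;> norm_num)
    · by_cases h : p z.1 = c <;> simp [h, hμ0 z]
  have hSB : ∀ c : ℝ, Summable
      (fun z : X × Y => μ z * (if f z.1 = z.2 ∧ p z.1 = c then (1:ℝ) else 0)) := by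
    intro c
    apply Summable.of_nonneg_of_le (fun z => ?_) (fun z => ?_) hs
    · exact mul_nonneg (hμ0 z) (by split <;> norm_num)
    · by_cases h : f z.1 = z.2 ∧ p z.1 = c <;> simp [h, hμ0 z]
  -- the key identity
  have key : ∀ c : ℝ,
      (∑' z : X × Y, μ z * (p z.1 - if f z.1 = z.2 then (1:ℝ) else 0) *
          (if p z.1 = c then (1:ℝ) else 0))
        = c * (∑' z : X × Y, μ z * (if p z.1 = c then (1:ℝ) else 0))
          - (∑' z : X × Y, μ z * (if f z.1 = z.2 ∧ p z.1 = c then (1:ℝ) else 0)) := by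
    intro c
    rw [← tsum_mul_left, ← Summable.tsum_sub ((hSP c).mul_left c) (hSB c)]
    apply tsum_congr
    intro z
    by_cases h1 : p z.1 = c <;> by_cases h2 : f z.1 = z.2 <;> simp [h1, h2] <;> ring_nf
  constructor
  · intro H c _ _ hPc
    -- find a support point with p x = c
    obtain ⟨z0, hz0⟩ : ∃ z : X × Y, 0 < μ z * (if p z.1 = c then (1:ℝ) else 0) := by
      by_contra h
      push_neg at h
      have : (∑' z : X × Y, μ z * (if p z.1 = c then (1:ℝ) else 0)) ≤ 0 :=
        tsum_nonpos h
      linarith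
    have hpz : p z0.1 = c := by
      by_contra h
      simp [h] at hz0
    have hμz : 0 < μ z0 := by
      by_contra h
      push_neg at h
      have := hμ0 z0
      have : μ z0 = 0 := le_antisymm h this
      simp [this] at hz0
    have hmarg : 0 < (∑' y : Y, μ (z0.1, y)) := by
      have hsum : Summable (fun y : Y => μ (z0.1, y)) :=
        hs.comp_injective (fun y₁ y₂ h => by simpa using congrArg Prod.snd h : Function.Injective (fun y => (z0.1, y)))
      have := Summable.le_tsum hsum z0.2 (fun y _ => hμ0 (z0.1, y))
      calc (0:ℝ) < μ z0 := hμz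
        _ = μ (z0.1, z0.2) := by simp
        _ ≤ _ := this
    have := H z0.1 hmarg
    rw [hpz] at this
    rw [key c] at this
    rw [div_eq_iff (ne_of_gt hPc)]
    linarith
  · intro H x hx
    set c := p x with hc
    have hPc : 0 < (∑' z : X × Y, μ z * (if p z.1 = c then (1:ℝ) else 0)) := by
      obtain ⟨y0, hy0⟩ : ∃ y : Y, 0 < μ (x, y) := by
        by_contra h
        push_neg at h
        have hz : ∀ y : Y, μ (x, y) = 0 := fun y => le_antisymm (h y) (hμ0 (x, y))
        simp [hz] at hx
      have hle := Summable.le_tsum (hSP c) (x, y0)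
        (fun z _ => mul_nonneg (hμ0 z) (by split <;> norm_num))
      rw [if_pos (show p (x, y0).1 = c from hc.symm), mul_one] at hle
      linarith
    have h2 := H c (hp x).1 (hp x).2 hPc
    rw [div_eq_iff (ne_of_gt hPc)] at h2
    rw [key c]
    linarith
end
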